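/- For every natural number n ≥ 2, ∑_{l=1}^{n-1} csc(πl/n) = −(2n·log n)/π − (2(γ + log 2)(n−1))/π − (2/π)·∑_{l=1}^{n-1} Ψ(l/(2n)). -/

import Mathlib

/-!
Since `(sin t)⁻¹ = cot (t / 2) - cot t` and `∑ cot (π l / n)` vanishes by the symmetry
`l ↦ n - l`, the left-hand side equals `∑ cot (π l / (2n))`. Differentiating the reflection
formula `Γ(x) Γ(1 - x) = π / sin (π x)` gives `π cot (π x) = ψ(1 - x) - ψ(x)`, and the values
`ψ(l / (2n))`, `ψ(1 - l / (2n))` and `ψ(1 / 2)` together make up Gauss's sum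
`∑_{k=1}^{2n-1} ψ(k / (2n)) = -(2n - 1) γ - 2n log (2n)`. That sum is the logarithmic derivative
at `1` of Gauss's multiplication formula, which follows from the Bohr–Mollerup theorem.
-/

open Real Finset

/-- The digamma function: the logarithmic derivative of the Gamma function. -/
noncomputable def digamma (x : ℝ) : ℝ := deriv (fun y => Real.log (Real.Gamma y)) x

lemma ne_neg_natCast_of_pos {x : ℝ} (hx : 0 < x) (m : ℕ) : x ≠ -m :=
  ne_of_gt ((neg_nonpos.2 m.cast_nonneg).trans_lt hx)

lemma digamma_eq_deriv_Gamma_div {x : ℝ} (hx : ∀ m : ℕ, x ≠ -m) :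
    digamma x = deriv Gamma x / Gamma x :=
  ((differentiableAt_Gamma hx).hasDerivAt.log (Gamma_ne_zero hx)).deriv

lemma hasDerivAt_log_Gamma {x : ℝ} (hx : ∀ m : ℕ, x ≠ -m) :
    HasDerivAt (fun y => log (Gamma y)) (digamma x) x := by
  rw [digamma_eq_deriv_Gamma_div hx]
  exact (differentiableAt_Gamma hx).hasDerivAt.log (Gamma_ne_zero hx)

lemma digamma_one : digamma 1 = -eulerMascheroniConstant := by
  rw [digamma_eq_deriv_Gamma_div (ne_neg_natCast_of_pos one_pos), hasDerivAt_Gamma_one.deriv,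
    Gamma_one, div_one]

lemma digamma_one_half : digamma (1 / 2) = -eulerMascheroniConstant - 2 * log 2 := by
  rw [digamma_eq_deriv_Gamma_div (ne_neg_natCast_of_pos one_half_pos),
    hasDerivAt_Gamma_one_half.deriv, Gamma_one_half_eq]
  field_simp
  ring

lemma digamma_one_sub_sub_digamma {x : ℝ} (hx : sin (π * x) ≠ 0) :
    digamma (1 - x) - digamma x = π * cot (π * x) := by
  have hx₀ : ∀ m : ℕ, x ≠ -m := fun m h => hx (by simp [h, mul_comm π, sin_nat_mul_pi])
  have hx₁ : ∀ m : ℕ, 1 - x ≠ -m := fun m h => hx (by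
    rw [show x = m + 1 by linarith, mul_comm, ← Nat.cast_succ, sin_nat_mul_pi])
  have hprod : HasDerivAt (fun y => Gamma y * Gamma (1 - y))
      (deriv Gamma x * Gamma (1 - x) - Gamma x * deriv Gamma (1 - x)) x := by
    have h₁ : HasDerivAt (fun y => Gamma (1 - y)) (deriv Gamma (1 - x) * -1) x :=
      (differentiableAt_Gamma hx₁).hasDerivAt.comp x ((hasDerivAt_id x).const_sub 1)
    exact ((differentiableAt_Gamma hx₀).hasDerivAt.mul h₁).congr_deriv (by ring)
  have hquot : HasDerivAt (fun y => π / sin (π * y))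
      ((0 * sin (π * x) - π * (cos (π * x) * π)) / sin (π * x) ^ 2) x := by
    simpa using (hasDerivAt_const x π).fun_div ((hasDerivAt_id x).const_mul π).sin hx
  have hderiv := hprod.unique (hquot.congr_of_eventuallyEq
    (Filter.Eventually.of_forall fun y => Gamma_mul_Gamma_one_sub y))
  have hΓ₀ := Gamma_ne_zero hx₀
  have hΓ₁ := Gamma_ne_zero hx₁
  rw [digamma_eq_deriv_Gamma_div hx₀, digamma_eq_deriv_Gamma_div hx₁, cot_eq_cos_div_sin]
  field_simp
  rw [mul_comm (Gamma (1 - x)) (Gamma x), Gamma_mul_Gamma_one_sub, mul_comm x π]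
  field_simp at hderiv ⊢
  linear_combination -hderiv

lemma ConvexOn.finset_sum {ι : Type*} {s : Set ℝ} {f : ι → ℝ → ℝ} (t : Finset ι)
    (hs : Convex ℝ s) (hf : ∀ i ∈ t, ConvexOn ℝ s (f i)) :
    ConvexOn ℝ s fun x => ∑ i ∈ t, f i x := by
  classical
  induction t using Finset.induction_on with
  | empty => simpa using convexOn_const 0 hs
  | insert i t hi ih =>
    simp only [Finset.sum_insert hi]
    exact (hf i (mem_insert_self i t)).add (ih fun j hj => hf j (mem_insert_of_mem hj))

lemma ConvexOn.comp_mul_add {f : ℝ → ℝ} (hf : ConvexOn ℝ (Set.Ioi 0) f) {a b : ℝ} (ha : 0 < a)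
    (hb : 0 ≤ b) : ConvexOn ℝ (Set.Ioi 0) fun x => f (a * x + b) := by
  refine ⟨convex_Ioi 0, fun x hx y hy p q hp hq hpq => ?_⟩
  have h := hf.2 (show 0 < a * x + b by simp at hx; positivity)
    (show 0 < a * y + b by simp at hy; positivity) hp hq hpq
  convert h using 2
  simp only [smul_eq_mul]
  linear_combination b * hpq.symm

section Multiplication

variable {m : ℕ}

noncomputable def multiplicationGamma (m : ℕ) (x : ℝ) : ℝ :=
  (m : ℝ) ^ (x - 1) * (∏ l ∈ range m, Gamma ((x + l) / m)) / ∏ l ∈ range m, Gamma ((1 + l) / m)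

lemma prod_Gamma_add_div_pos (hm : 0 < m) {x : ℝ} (hx : 0 < x) :
    0 < ∏ l ∈ range m, Gamma ((x + l) / m) :=
  prod_pos fun _ _ => Gamma_pos_of_pos (by positivity)

lemma multiplicationGamma_pos (hm : 0 < m) {x : ℝ} (hx : 0 < x) :
    0 < multiplicationGamma m x := by
  have := prod_Gamma_add_div_pos hm hx
  have := prod_Gamma_add_div_pos hm one_pos
  unfold multiplicationGamma
  positivity

lemma multiplicationGamma_one (hm : 0 < m) : multiplicationGamma m 1 = 1 := by
  rw [multiplicationGamma, sub_self, rpow_zero, one_mul,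
    div_self (prod_Gamma_add_div_pos hm one_pos).ne']

lemma multiplicationGamma_add_one (hm : 0 < m) {x : ℝ} (hx : 0 < x) :
    multiplicationGamma m (x + 1) = x * multiplicationGamma m x := by
  set g : ℕ → ℝ := fun l => Gamma ((x + l) / m)
  have hshift : ∏ l ∈ range m, Gamma ((x + 1 + l) / m) = ∏ l ∈ range m, g (l + 1) := by
    refine prod_congr rfl fun l _ => ?_
    simp only [g, Nat.cast_succ]
    ring_nf
  have hlast : g m = x / m * g 0 := by
    simp only [g, CharP.cast_eq_zero, add_zero]
    rw [add_div, div_self (by positivity), Gamma_add_one (by positivity)]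
  have hprod : (∏ l ∈ range m, g (l + 1)) * g 0 = x / m * (∏ l ∈ range m, g l) * g 0 := by
    rw [← prod_range_succ', prod_range_succ, hlast]
    ring
  have hg₀ : g 0 ≠ 0 := (Gamma_pos_of_pos (by simpa [g] using div_pos hx (by positivity))).ne'
  rw [multiplicationGamma, multiplicationGamma, hshift, mul_right_cancel₀ hg₀ hprod,
    add_sub_cancel_right, rpow_sub_one (by positivity)]
  field_simp
  rfl

lemma log_multiplicationGamma (hm : 0 < m) {x : ℝ} (hx : 0 < x) :
    log (multiplicationGamma m x) = (x - 1) * log m +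
      ∑ l ∈ range m, log (Gamma ((x + l) / m)) - log (∏ l ∈ range m, Gamma ((1 + l) / m)) := by
  have hpow : (0 : ℝ) < (m : ℝ) ^ (x - 1) := by positivity
  rw [multiplicationGamma, log_div (mul_pos hpow (prod_Gamma_add_div_pos hm hx)).ne'
    (prod_Gamma_add_div_pos hm one_pos).ne', log_mul hpow.ne' (prod_Gamma_add_div_pos hm hx).ne',
    log_rpow (by positivity), log_prod fun l _ => (Gamma_pos_of_pos (by positivity)).ne']

lemma convexOn_log_multiplicationGamma (hm : 0 < m) :
    ConvexOn ℝ (Set.Ioi 0) (log ∘ multiplicationGamma m) := by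
  have hsum : ConvexOn ℝ (Set.Ioi 0) fun x => ∑ l ∈ range m, log (Gamma ((x + l) / m)) :=
    ConvexOn.finset_sum _ (convex_Ioi 0) fun l _ => by
      simpa [div_eq_inv_mul, mul_add] using convexOn_log_Gamma.comp_mul_add
        (inv_pos.2 (Nat.cast_pos.2 hm)) (by positivity : (0 : ℝ) ≤ l / m)
  have hlin : ConvexOn ℝ (Set.Ioi 0) fun x : ℝ => log m • x :=
    (convexOn_id (convex_Ioi 0)).smul (log_natCast_nonneg m)
  refine ((hlin.add hsum).add_const (-log m - log (∏ l ∈ range m, Gamma ((1 + l) / m)))).congr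
    fun x hx => ?_
  rw [Function.comp_apply, log_multiplicationGamma hm hx]
  simp only [Pi.add_apply, smul_eq_mul]
  ring

lemma multiplicationGamma_eq_Gamma (hm : 0 < m) {x : ℝ} (hx : 0 < x) :
    multiplicationGamma m x = Gamma x :=
  eq_Gamma_of_log_convex (convexOn_log_multiplicationGamma hm)
    (multiplicationGamma_add_one hm) (multiplicationGamma_pos hm) (multiplicationGamma_one hm) hx

lemma sum_digamma_add_div (hm : 0 < m) {x : ℝ} (hx : 0 < x) :
    ∑ l ∈ range m, digamma ((x + l) / m) = m * (digamma x - log m) := by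
  have hsum : HasDerivAt (fun y => ∑ l ∈ range m, log (Gamma ((y + l) / m)))
      (∑ l ∈ range m, digamma ((x + l) / m) * (1 / m)) x :=
    HasDerivAt.fun_sum fun l _ =>
      (hasDerivAt_log_Gamma (ne_neg_natCast_of_pos (by positivity))).comp x
        (((hasDerivAt_id x).add_const (l : ℝ)).div_const (m : ℝ))
  have hlog : HasDerivAt (fun y => log (Gamma y))
      (1 * log m + ∑ l ∈ range m, digamma ((x + l) / m) * (1 / m)) x := by
    refine ((((hasDerivAt_id x).sub_const 1).mul_const (log m)).add hsum).sub_const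
      (log (∏ l ∈ range m, Gamma ((1 + l) / m))) |>.congr_of_eventuallyEq ?_
    filter_upwards [Ioi_mem_nhds hx] with y hy
    rw [← multiplicationGamma_eq_Gamma hm hy, log_multiplicationGamma hm hy]
    rfl
  have h := (hasDerivAt_log_Gamma (ne_neg_natCast_of_pos hx)).unique hlog
  rw [← sum_mul] at h
  field_simp at h ⊢
  linarith

lemma sum_Ico_digamma_div (hm : 0 < m) :
    ∑ k ∈ Ico 1 m, digamma (k / m) = -(m - 1) * eulerMascheroniConstant - m * log m := by
  obtain ⟨k, rfl⟩ : ∃ k, m = k + 1 := ⟨m - 1, by omega⟩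
  have h := sum_digamma_add_div hm one_pos
  rw [digamma_one, sum_range_succ, add_comm (1 : ℝ), ← Nat.cast_succ,
    div_self (by positivity), digamma_one] at h
  rw [sum_Ico_eq_sum_range, add_tsub_cancel_right]
  simp only [Nat.cast_add, Nat.cast_one, add_comm (1 : ℝ)] at h ⊢
  linarith

end Multiplication

lemma sum_Ico_one_two_mul {M : Type*} [AddCommMonoid M] (f : ℕ → M) {n : ℕ} (hn : 0 < n) :
    ∑ k ∈ Ico 1 (2 * n), f k = ∑ l ∈ Ico 1 n, (f l + f (2 * n - l)) + f n := by
  rw [sum_add_distrib, sum_Ico_reflect _ _ (by omega : n ≤ 2 * n + 1),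
    ← sum_Ico_consecutive _ (by omega : 1 ≤ n) (by omega : n ≤ 2 * n),
    sum_eq_sum_Ico_succ_bot (by omega : n < 2 * n),
    show 2 * n + 1 - n = n + 1 by omega, show 2 * n + 1 - 1 = 2 * n by omega]
  abel

lemma sum_Ico_digamma_add_digamma_one_sub {n : ℕ} (hn : 0 < n) :
    ∑ l ∈ Ico 1 n, (digamma (l / (2 * n)) + digamma (1 - l / (2 * n))) =
      -2 * (n - 1) * (eulerMascheroniConstant + log 2) - 2 * n * log n := by
  have hfold : ∑ k ∈ Ico 1 (2 * n), digamma (k / (2 * n)) =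
      ∑ l ∈ Ico 1 n, (digamma (l / (2 * n)) + digamma (1 - l / (2 * n))) + digamma (1 / 2) := by
    rw [sum_Ico_one_two_mul _ hn]
    congr 1
    · refine sum_congr rfl fun l hl => ?_
      rw [Nat.cast_sub (by have := mem_Ico.1 hl; omega : l ≤ 2 * n)]
      congr 2
      push_cast
      field_simp
    · congr 1
      field_simp
  have hgauss := sum_Ico_digamma_div (m := 2 * n) (by omega)
  push_cast at hgauss
  rw [hfold, digamma_one_half, log_mul two_ne_zero (by positivity)] at hgauss
  linarith

-- Holds for every `t`: where `sin t = 0`, all three terms are junk values `0`.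
lemma inv_sin_eq_cot_half_sub_cot (t : ℝ) : (sin t)⁻¹ = cot (t / 2) - cot t := by
  have ht : t = 2 * (t / 2) := by ring
  rw [cot_eq_cos_div_sin, cot_eq_cos_div_sin, ht, sin_two_mul, cos_two_mul, ← ht]
  rcases eq_or_ne (sin (t / 2)) 0 with hs | hs
  · simp [hs]
  rcases eq_or_ne (cos (t / 2)) 0 with hc | hc
  · simp [hc]
  field_simp
  nlinarith [sin_sq_add_cos_sq (t / 2)]

lemma sum_Ico_cot_pi_mul_div (n : ℕ) : ∑ l ∈ Ico 1 n, cot (π * l / n) = 0 := by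
  have hrefl : ∑ l ∈ Ico 1 n, cot (π * ↑(n - l) / n) = ∑ l ∈ Ico 1 n, cot (π * l / n) := by
    simpa using sum_Ico_reflect (fun k : ℕ => cot (π * k / n)) 1 (Nat.le_succ n)
  have hneg : ∀ l ∈ Ico 1 n, cot (π * ↑(n - l) / n) = -cot (π * l / n) := by
    intro l hl
    have hn : (n : ℝ) ≠ 0 := Nat.cast_ne_zero.2 (by have := mem_Ico.1 hl; omega)
    rw [Nat.cast_sub (mem_Ico.1 hl).2.le, mul_sub, sub_div, mul_div_assoc, div_self hn, mul_one,
      cot_eq_cos_div_sin, cot_eq_cos_div_sin, cos_pi_sub, sin_pi_sub, neg_div]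
  rw [sum_congr rfl hneg, sum_neg_distrib] at hrefl
  linarith

lemma sum_Ico_inv_sin_pi_mul_div (n : ℕ) :
    ∑ l ∈ Ico 1 n, (sin (π * l / n))⁻¹ = ∑ l ∈ Ico 1 n, cot (π * l / (2 * n)) := by
  simp_rw [inv_sin_eq_cot_half_sub_cot, sum_sub_distrib, sum_Ico_cot_pi_mul_div, sub_zero,
    div_div, mul_comm (n : ℝ) 2]

theorem csc_sum_digamma_log (n : ℕ) (hn : 2 ≤ n) :
    ∑ l ∈ Finset.Ico 1 n, (Real.sin (π * l / n))⁻¹ =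
      -(2 * n * Real.log n) / π -
        (2 * (Real.eulerMascheroniConstant + Real.log 2) * ((n : ℝ) - 1)) / π -
        (2 / π) * ∑ l ∈ Finset.Ico 1 n, digamma (l / (2 * n)) := by
  have hn₀ : 0 < n := by omega
  have hcot : ∀ l ∈ Ico 1 n, π * cot (π * l / (2 * n)) =
      digamma (1 - l / (2 * n)) - digamma (l / (2 * n)) := by
    intro l hl
    have hln : (l : ℝ) < n := by exact_mod_cast (mem_Ico.1 hl).2
    have hl₀ : (0 : ℝ) < l := by exact_mod_cast (mem_Ico.1 hl).1
    rw [mul_div_assoc, digamma_one_sub_sub_digamma (sin_pos_of_pos_of_lt_pi (by positivity)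
      (by rw [mul_lt_iff_lt_one_right pi_pos, div_lt_one (by positivity)]; linarith)).ne']
  have hpi : π * ∑ l ∈ Ico 1 n, (sin (π * l / n))⁻¹ =
      ∑ l ∈ Ico 1 n, digamma (1 - l / (2 * n)) - ∑ l ∈ Ico 1 n, digamma (l / (2 * n)) := by
    rw [sum_Ico_inv_sin_pi_mul_div, mul_sum, sum_congr rfl hcot, sum_sub_distrib]
  have hsum := sum_Ico_digamma_add_digamma_one_sub hn₀
  rw [sum_add_distrib] at hsum
  set T := ∑ l ∈ Ico 1 n, digamma (l / (2 * n))
  set U := ∑ l ∈ Ico 1 n, digamma (1 - l / (2 * n))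
  set S := ∑ l ∈ Ico 1 n, (sin (π * l / n))⁻¹
  field_simp
  linarith
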